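/- For any learning algorithm A (assuming all expectations below are finite), the expected generalization error admits the three representations: E_μ(A) = (1/n)·Σ_{i=1}^n E_{Z̃⁺_i, W̃_i}[ ℓ(W̃⁻_i, Z̃⁺_i) − ℓ(W̃⁺_i, Z̃⁺_i) ] = (1/n)·Σ_{i=1}^n E_{Z̃_i, W̃_i, U_i}[ (−1)^{U_i} ( ℓ(W̃⁻_i, Ẑ_i) − ℓ(W̃⁺_i, Ẑ_i) ) ] = (1/n)·Σ_{i=1}^n E_{Z̃⁺_i, W_i, W̄_i, U_i}[ (−1)^{U_i} ( ℓ(W̄_i, Z̃⁺_i) − ℓ(W_i, Z̃⁺_i) ) ]. -/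

import Mathlib

open MeasureTheory ProbabilityTheory

noncomputable section

namespace SCHPaper

/-- Real-valued Kullback–Leibler divergence `KL(μ‖ν)` (meaningful when `μ ≪ ν` and the
log-density is integrable). -/
def klReal {α : Type*} [MeasurableSpace α] (μ ν : Measure α) : ℝ :=
  ∫ x, Real.log ((μ.rnDeriv ν) x).toReal ∂μ

/-- Mutual information `I(X;Y)` under the probability measure `P`. -/
def miReal {Ω β γ : Type*} [MeasurableSpace Ω] [MeasurableSpace β] [MeasurableSpace γ]
    (P : Measure Ω) (X : Ω → β) (Y : Ω → γ) : ℝ :=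
  klReal (P.map fun ω => (X ω, Y ω)) ((P.map X).prod (P.map Y))

/-- Disintegrated mutual information `I^t(X;Y)`, the mutual information between `X` and `Y`
under the joint law conditioned on `T = t` (via regular conditional distributions). -/
def dmiReal {Ω β γ δ : Type*} [MeasurableSpace Ω] [MeasurableSpace β] [MeasurableSpace γ]
    [MeasurableSpace δ] [StandardBorelSpace β] [Nonempty β] [StandardBorelSpace γ] [Nonempty γ]
    (P : Measure Ω) [IsFiniteMeasure P] (X : Ω → β) (Y : Ω → γ) (T : Ω → δ) (t : δ) : ℝ :=
  klReal ((condDistrib (fun ω => (X ω, Y ω)) T P) t)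
    (((condDistrib X T P) t).prod ((condDistrib Y T P) t))

/-- Conditional mutual information `I(X;Y|T) = E_T[I^T(X;Y)]`. -/
def cmiReal {Ω β γ δ : Type*} [MeasurableSpace Ω] [MeasurableSpace β] [MeasurableSpace γ]
    [MeasurableSpace δ] [StandardBorelSpace β] [Nonempty β] [StandardBorelSpace γ] [Nonempty γ]
    (P : Measure Ω) [IsFiniteMeasure P] (X : Ω → β) (Y : Ω → γ) (T : Ω → δ) : ℝ :=
  ∫ t, dmiReal P X Y T t ∂(P.map T)

/-- The support of a measure on a topological space. -/
def msupport {α : Type*} [TopologicalSpace α] [MeasurableSpace α] (ν : Measure α) : Set α :=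
  {x | ∀ u : Set α, IsOpen u → x ∈ u → 0 < ν u}

/-- The uniform distribution on `{0,1}` (identified with `Bool`; `false` is `0`). -/
def unifBool : Measure Bool := (PMF.uniformOfFintype Bool).toMeasure

instance : IsProbabilityMeasure unifBool := PMF.toMeasure.isProbabilityMeasure _

variable {Z R W : Type*} [MeasurableSpace Z] [MeasurableSpace R] [MeasurableSpace W]

/-! ### The supersample space:
`ω = (Z̃, R, U)` where `Z̃` is the `n × 2` supersample matrix (a function `Fin n → Z × Z`,
first component = column `0` = `+`), `R` is the algorithmic randomness and
`U = (U_1, …, U_n)` are the i.i.d. Bernoulli(1/2) selectors. -/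

abbrev SSOmega (Z R : Type*) (n : ℕ) : Type _ := (Fin n → Z × Z) × R × (Fin n → Bool)

/-- The law of the supersample experiment: the `2n` supersample entries are i.i.d. `μ`,
the randomness `R ∼ ρ` and `U` i.i.d. uniform on `{0,1}`, all independent. -/
def ssP (μ : Measure Z) (ρ : Measure R) (n : ℕ) : Measure (SSOmega Z R n) :=
  (Measure.pi fun _ : Fin n => μ.prod μ).prod (ρ.prod (Measure.pi fun _ : Fin n => unifBool))

instance (μ : Measure Z) (ρ : Measure R) [IsProbabilityMeasure μ] [IsProbabilityMeasure ρ]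
    (n : ℕ) : IsProbabilityMeasure (ssP μ ρ n) := by unfold ssP; infer_instance

/-- `Z̃⁺_i`. -/
def Ztp {Z R : Type*} (n : ℕ) (i : Fin n) : SSOmega Z R n → Z := fun ω => (ω.1 i).1

/-- `Z̃⁻_i`. -/
def Ztm {Z R : Type*} (n : ℕ) (i : Fin n) : SSOmega Z R n → Z := fun ω => (ω.1 i).2

/-- `U_i` (`false` = `0` = no flip). -/
def Uv {Z R : Type*} (n : ℕ) (i : Fin n) : SSOmega Z R n → Bool := fun ω => ω.2.2 i

/-- `Ẑ_i = Z̃_{i,U_i}`. -/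
def Zhat {Z R : Type*} (n : ℕ) (i : Fin n) : SSOmega Z R n → Z :=
  fun ω => if ω.2.2 i then (ω.1 i).2 else (ω.1 i).1

/-- `(-1)^{U_i}` as a real number. -/
def sgn {Z R : Type*} (n : ℕ) (i : Fin n) : SSOmega Z R n → ℝ :=
  fun ω => if ω.2.2 i then -1 else 1

variable {n : ℕ}

/-- `W̃⁺ = A(Z̃⁺_{[n]}, R)`. -/
def Wtp (A : (Fin n → Z) → R → W) : SSOmega Z R n → W :=
  fun ω => A (fun j => (ω.1 j).1) ω.2.1

/-- `W̃⁻_i = A(Z̃⁺_{[n]∼i}, R)`, trained on the first column with its `i`-th entry replaced. -/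
def Wtm (A : (Fin n → Z) → R → W) (i : Fin n) : SSOmega Z R n → W :=
  fun ω => A (Function.update (fun j => (ω.1 j).1) i ((ω.1 i).2)) ω.2.1

/-- `W_i = W̃_{i,U_i}`. -/
def Wsel (A : (Fin n → Z) → R → W) (i : Fin n) : SSOmega Z R n → W :=
  fun ω => if ω.2.2 i then Wtm A i ω else Wtp A ω

/-- `W̄_i = W̃_{i,1-U_i}`. -/
def Wbar (A : (Fin n → Z) → R → W) (i : Fin n) : SSOmega Z R n → W :=
  fun ω => if ω.2.2 i then Wtp A ω else Wtm A i ω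

/-- Population risk `L_μ(w)`. -/
def popRisk (μ : Measure Z) (ℓ : W → Z → ℝ) (w : W) : ℝ := ∫ z, ℓ w z ∂μ

/-- Expected generalization error `E_μ(A) = E[L_μ(W)] - E[L_S(W)]`, realized on the
supersample space through `W = W̃⁺` and `S = Z̃⁺_{[n]}` (which has law `μⁿ ⊗ ρ`). -/
def genErr (μ : Measure Z) (ρ : Measure R) (n : ℕ) (A : (Fin n → Z) → R → W)
    (ℓ : W → Z → ℝ) : ℝ :=
  (∫ ω, popRisk μ ℓ (Wtp A ω) ∂(ssP μ ρ n)) -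
    ∫ ω, (n : ℝ)⁻¹ * ∑ i, ℓ (Wtp A ω) (Ztp n i ω) ∂(ssP μ ρ n)

/-! ### The `(S, S', R)` space used for the stability notions. -/

abbrev SROmega (Z R : Type*) (n : ℕ) : Type _ := (Fin n → Z) × (Fin n → Z) × R

/-- The law of `(S, S', R)`: `S, S' ∼ μⁿ` i.i.d. and `R ∼ ρ`, all independent. -/
def srP (μ : Measure Z) (ρ : Measure R) (n : ℕ) : Measure (SROmega Z R n) :=
  (Measure.pi fun _ : Fin n => μ).prod ((Measure.pi fun _ : Fin n => μ).prod ρ)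

instance (μ : Measure Z) (ρ : Measure R) [IsProbabilityMeasure μ] [IsProbabilityMeasure ρ]
    (n : ℕ) : IsProbabilityMeasure (srP μ ρ n) := by unfold srP; infer_instance

/-- The training sample `S`. -/
def Sv {Z R : Type*} (n : ℕ) : SROmega Z R n → (Fin n → Z) := fun ω => ω.1

/-- `Z_i`, the `i`-th training point. -/
def Ziv {Z R : Type*} (n : ℕ) (i : Fin n) : SROmega Z R n → Z := fun ω => ω.1 i

/-- `W = A(S,R)`. -/
def Wv (A : (Fin n → Z) → R → W) : SROmega Z R n → W := fun ω => A ω.1 ω.2.2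

/-- `W^i = A(S^i,R)` where `S^i` is `S` with its `i`-th entry replaced by `Z'_i`. -/
def Wiv (A : (Fin n → Z) → R → W) (i : Fin n) : SROmega Z R n → W :=
  fun ω => A (Function.update ω.1 i (ω.2.1 i)) ω.2.2

/-- `β`-uniform (strong) stability. -/
def UnifStable (n : ℕ) (A : (Fin n → Z) → R → W) (ℓ : W → Z → ℝ) (β : ℝ) : Prop :=
  ∀ (s : Fin n → Z) (i : Fin n) (z' z : Z) (r : R),
    |ℓ (A s r) z - ℓ (A (Function.update s i z') r) z| ≤ β

/-- The algorithm is symmetric: invariant under permutations of the training sample. -/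
def SymmetricAlg (n : ℕ) (A : (Fin n → Z) → R → W) : Prop :=
  ∀ (s : Fin n → Z) (r : R) (σ : Equiv.Perm (Fin n)), A (s ∘ σ) r = A s r


section Stability

variable {Z R W : Type*} [MeasurableSpace Z] [MeasurableSpace R] [MeasurableSpace W]

/-- `γ₁`-sample-conditioned-hypothesis stability of type A:
for every `i`, every `w` in the sample-dependent hypothesis space
`⋃_s supp P_{W|S=s}` and every `z`,
`|ℓ(w,z) - E_{W^i|W=w}[ℓ(W^i,z)]| ≤ γ₁`. -/
def SCHA [StandardBorelSpace W] [Nonempty W] [TopologicalSpace W]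
    (μ : Measure Z) (ρ : Measure R) [IsProbabilityMeasure μ] [IsProbabilityMeasure ρ]
    (n : ℕ) (A : (Fin n → Z) → R → W) (ℓ : W → Z → ℝ) (γ : ℝ) : Prop :=
  ∀ i : Fin n,
    ∀ w ∈ ⋃ s : Fin n → Z, msupport ((condDistrib (Wv A) (Sv n) (srP μ ρ n)) s),
      ∀ z : Z,
        |ℓ w z - ∫ w', ℓ w' z ∂((condDistrib (Wiv A i) (Wv A) (srP μ ρ n)) w)| ≤ γ

/-- `γ₂`-sample-conditioned-hypothesis stability of type B:
for every `i`, `E_{S,R,Z'}[(ℓ(W,Z') - E_{W^i|W}[ℓ(W^i,Z')])²] ≤ γ₂²` where `Z' ∼ μ`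
is independent of `(S,R)`. -/
def SCHB [StandardBorelSpace W] [Nonempty W]
    (μ : Measure Z) (ρ : Measure R) [IsProbabilityMeasure μ] [IsProbabilityMeasure ρ]
    (n : ℕ) (A : (Fin n → Z) → R → W) (ℓ : W → Z → ℝ) (γ : ℝ) : Prop :=
  ∀ i : Fin n,
    (∫ p, (ℓ (Wv A p.1) p.2 -
        ∫ w', ℓ w' p.2 ∂((condDistrib (Wiv A i) (Wv A) (srP μ ρ n)) (Wv A p.1))) ^ 2
      ∂((srP μ ρ n).prod μ)) ≤ γ ^ 2

/-- `γ₃`-sample-conditioned-hypothesis stability of type C: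
for every `i`, `E_{W,W^i}[sup_{z ∈ supp P_{Z_i|W,W^i}} |ℓ(W,z) - ℓ(W^i,z)|] ≤ γ₃`. -/
def SCHC [StandardBorelSpace Z] [Nonempty Z] [TopologicalSpace Z]
    (μ : Measure Z) (ρ : Measure R) [IsProbabilityMeasure μ] [IsProbabilityMeasure ρ]
    (n : ℕ) (A : (Fin n → Z) → R → W) (ℓ : W → Z → ℝ) (γ : ℝ) : Prop :=
  ∀ i : Fin n,
    (∫ ω, sSup ((fun z => |ℓ (Wv A ω) z - ℓ (Wiv A i ω) z|) ''
        msupport ((condDistrib (Ziv n i) (fun ω' => (Wv A ω', Wiv A i ω')) (srP μ ρ n))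
          (Wv A ω, Wiv A i ω))) ∂(srP μ ρ n)) ≤ γ

/-- `γ₄`-sample-conditioned-hypothesis stability of type D:
for every `i`, `E_{S,Z'_i,R}[(ℓ(W,Z_i) - ℓ(W^i,Z_i))²] ≤ γ₄²`. -/
def SCHD (μ : Measure Z) (ρ : Measure R)
    (n : ℕ) (A : (Fin n → Z) → R → W) (ℓ : W → Z → ℝ) (γ : ℝ) : Prop :=
  ∀ i : Fin n,
    (∫ ω, (ℓ (Wv A ω) (ω.1 i) - ℓ (Wiv A i ω) (ω.1 i)) ^ 2 ∂(srP μ ρ n)) ≤ γ ^ 2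

/-- The pointwise bound `Δ₁` on the loss difference of a pair of neighbouring hypotheses,
valid on the support of `P_{Z_i | W = w⁺, W^i = w⁻}`. -/
def DeltaOneBound [StandardBorelSpace Z] [Nonempty Z] [TopologicalSpace Z]
    (μ : Measure Z) (ρ : Measure R) [IsProbabilityMeasure μ] [IsProbabilityMeasure ρ]
    (n : ℕ) (A : (Fin n → Z) → R → W) (ℓ : W → Z → ℝ) (Δ : W × W → ℝ) : Prop :=
  ∀ (i : Fin n) (wp wm : W),
    ∀ z ∈ msupport ((condDistrib (Ziv n i) (fun ω => (Wv A ω, Wiv A i ω)) (srP μ ρ n)) (wp, wm)),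
      |ℓ wp z - ℓ wm z| ≤ Δ (wp, wm)

/-- The pointwise bound `Δ₂` on the loss difference, valid on the support of
`P_{(W,W^i) | Z_i = z}`. -/
def DeltaTwoBound [StandardBorelSpace W] [Nonempty W] [TopologicalSpace W]
    (μ : Measure Z) (ρ : Measure R) [IsProbabilityMeasure μ] [IsProbabilityMeasure ρ]
    (n : ℕ) (A : (Fin n → Z) → R → W) (ℓ : W → Z → ℝ) (Δ : Z → ℝ) : Prop :=
  ∀ (i : Fin n) (z : Z),
    ∀ p ∈ msupport ((condDistrib (fun ω => (Wv A ω, Wiv A i ω)) (Ziv n i) (srP μ ρ n)) z),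
      |ℓ p.1 z - ℓ p.2 z| ≤ Δ z

end Stability

/-!
Swapping `Z̃⁺_i` with `Z̃⁻_i` preserves the law of the supersample and exchanges `W̃⁺` with
`W̃⁻_i`, while `Z̃⁻_i` is a fresh sample independent of `(Z̃⁺_{[n]}, R)`. Hence
`E[ℓ(W̃⁻_i, Z̃⁺_i)] = E[ℓ(W̃⁺, Z̃⁻_i)] = E[L_μ(W̃⁺)]`, which is the first representation.
Flipping `U_i` also preserves the law, so the mask-for-data integrand has the mean of the average
of its two branches, and the swap shows that both branches have the mean of the first
representation. The mask-for-weight integrand agrees with the first one pointwise.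
-/

section Supersample

variable {Z R W : Type*} {n : ℕ}

theorem _root_.MeasureTheory.MeasurePreserving.integral_comp_of_aestronglyMeasurable
    {α β : Type*} [MeasurableSpace α] [MeasurableSpace β] {μa : Measure α} {μb : Measure β}
    {f : α → β} (hf : MeasurePreserving f μa μb) {g : β → ℝ} (hg : AEStronglyMeasurable g μb) :
    ∫ x, g (f x) ∂μa = ∫ y, g y ∂μb := by
  rw [← hf.map_eq] at hg ⊢
  exact (integral_map hf.aemeasurable hg).symm

theorem measurePreserving_update_apply {ι α : Type*} [Fintype ι] [DecidableEq ι]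
    [MeasurableSpace α] {ν : Measure α} [SigmaFinite ν] {k : α → α}
    (hk : MeasurePreserving k ν ν) (i : ι) :
    MeasurePreserving (fun x : ι → α => Function.update x i (k (x i)))
      (Measure.pi fun _ => ν) (Measure.pi fun _ => ν) := by
  have hfun : (fun x : ι → α => Function.update x i (k (x i)))
      = fun x j => (if j = i then k else id) (x j) := by
    funext x j
    by_cases h : j = i
    · subst h; simp
    · simp [h]
  rw [hfun]
  refine measurePreserving_pi _ _ fun j => ?_
  by_cases h : j = i
  · simpa [h] using hk
  · simpa [h] using MeasurePreserving.id ν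

theorem measurePreserving_prodRightComm {α β γ : Type*} [MeasurableSpace α] [MeasurableSpace β]
    [MeasurableSpace γ] (μa : Measure α) (μb : Measure β) (μc : Measure γ)
    [SFinite μa] [SFinite μb] [SFinite μc] :
    MeasurePreserving (fun p : (α × β) × γ => ((p.1.1, p.2), p.1.2))
      ((μa.prod μb).prod μc) ((μa.prod μc).prod μb) :=
  ((measurePreserving_prodAssoc μa μc μb).symm MeasurableEquiv.prodAssoc).comp
    (((MeasurePreserving.id μa).prod (Measure.measurePreserving_swap (μ := μb) (ν := μc))).comp
      (measurePreserving_prodAssoc μa μb μc))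

theorem measurePreserving_not_unifBool : MeasurePreserving Bool.not unifBool unifBool := by
  refine ⟨measurable_from_top, ?_⟩
  rw [unifBool, PMF.toMeasure_map _ _ measurable_from_top]
  congr 1
  ext b
  cases b <;> simp [PMF.map_apply, PMF.uniformOfFintype_apply]

/-- The pair `(Z̃⁺_{[n]}, R)` from which `W̃⁺` is computed. -/
def trainingPair (ω : SSOmega Z R n) : (Fin n → Z) × R := (fun j => (ω.1 j).1, ω.2.1)

def swapRow (i : Fin n) (ω : SSOmega Z R n) : SSOmega Z R n :=
  (Function.update ω.1 i (ω.1 i).swap, ω.2)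

def flipMask (i : Fin n) (ω : SSOmega Z R n) : SSOmega Z R n :=
  (ω.1, ω.2.1, Function.update ω.2.2 i (!ω.2.2 i))

@[simp]
theorem Wtp_swapRow (A : (Fin n → Z) → R → W) (i : Fin n) (ω : SSOmega Z R n) :
    Wtp A (swapRow i ω) = Wtm A i ω := by
  simp only [Wtp, Wtm, swapRow]
  congr 1
  funext j
  rcases eq_or_ne j i with rfl | h <;> simp [*]

@[simp]
theorem Wtm_swapRow (A : (Fin n → Z) → R → W) (i : Fin n) (ω : SSOmega Z R n) :
    Wtm A i (swapRow i ω) = Wtp A ω := by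
  simp only [Wtp, Wtm, swapRow]
  congr 1
  funext j
  rcases eq_or_ne j i with rfl | h <;> simp [*]

@[simp]
theorem Ztp_swapRow (i : Fin n) (ω : SSOmega Z R n) : Ztp n i (swapRow i ω) = Ztm n i ω := by
  simp [Ztp, Ztm, swapRow]

@[simp]
theorem Ztm_swapRow (i : Fin n) (ω : SSOmega Z R n) : Ztm n i (swapRow i ω) = Ztp n i ω := by
  simp [Ztp, Ztm, swapRow]

theorem sgn_mul_loss_Wbar_sub_Wsel (A : (Fin n → Z) → R → W) (ℓ : W → Z → ℝ) (i : Fin n)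
    (ω : SSOmega Z R n) :
    sgn n i ω * (ℓ (Wbar A i ω) (Ztp n i ω) - ℓ (Wsel A i ω) (Ztp n i ω))
      = ℓ (Wtm A i ω) (Ztp n i ω) - ℓ (Wtp A ω) (Ztp n i ω) := by
  cases hω : ω.2.2 i <;> simp [sgn, Wbar, Wsel, hω]

variable [MeasurableSpace Z] [MeasurableSpace R]
variable (μ : Measure Z) [IsProbabilityMeasure μ] (ρ : Measure R) [IsProbabilityMeasure ρ]

theorem measurePreserving_swapRow (i : Fin n) :
    MeasurePreserving (swapRow i) (ssP μ ρ n) (ssP μ ρ n) :=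
  (measurePreserving_update_apply Measure.measurePreserving_swap i).prod (MeasurePreserving.id _)

theorem measurePreserving_flipMask (i : Fin n) :
    MeasurePreserving (flipMask i) (ssP μ ρ n) (ssP μ ρ n) :=
  (MeasurePreserving.id _).prod
    ((MeasurePreserving.id _).prod
      (measurePreserving_update_apply measurePreserving_not_unifBool i))

theorem measurePreserving_trainingPair :
    MeasurePreserving trainingPair (ssP μ ρ n) ((Measure.pi fun _ : Fin n => μ).prod ρ) :=
  (measurePreserving_fst.comp (measurePreserving_arrowProdEquivProdArrow Z Z (Fin n)
    (fun _ => μ) (fun _ => μ))).prod measurePreserving_fst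

theorem measurePreserving_trainingPair_Ztm (i : Fin n) :
    MeasurePreserving (fun ω => (trainingPair ω, Ztm n i ω)) (ssP μ ρ n)
      (((Measure.pi fun _ : Fin n => μ).prod ρ).prod μ) :=
  (measurePreserving_prodRightComm _ _ _).comp
    ((((MeasurePreserving.id _).prod (measurePreserving_eval _ i)).comp
      (measurePreserving_arrowProdEquivProdArrow Z Z (Fin n) (fun _ => μ) (fun _ => μ))).prod
        measurePreserving_fst)

theorem integral_ite_mask_eq_average (i : Fin n) {f g : SSOmega Z R n → ℝ}
    (hf : Integrable f (ssP μ ρ n)) (hg : Integrable g (ssP μ ρ n))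
    (hf_flip : ∀ ω, f (flipMask i ω) = f ω) (hg_flip : ∀ ω, g (flipMask i ω) = g ω) :
    ∫ ω, (if ω.2.2 i then f ω else g ω) ∂(ssP μ ρ n)
      = ((∫ ω, f ω ∂(ssP μ ρ n)) + ∫ ω, g ω ∂(ssP μ ρ n)) / 2 := by
  set h : SSOmega Z R n → ℝ := fun ω => if ω.2.2 i then f ω else g ω
  have hmask : MeasurableSet {ω : SSOmega Z R n | ω.2.2 i = true} :=
    (measurable_pi_apply i).comp (measurable_snd.comp measurable_snd) (measurableSet_singleton _)
  have hh : Integrable h (ssP μ ρ n) := by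
    classical
    refine (Integrable.piecewise hmask hf.integrableOn hg.integrableOn).congr
      (ae_of_all _ fun ω => ?_)
    simp [h, Set.piecewise]
  have h_flip : ∫ ω, h (flipMask i ω) ∂(ssP μ ρ n) = ∫ ω, h ω ∂(ssP μ ρ n) :=
    (measurePreserving_flipMask μ ρ i).integral_comp_of_aestronglyMeasurable hh.1
  have h_add : ∀ ω, h ω + h (flipMask i ω) = f ω + g ω := by
    intro ω
    have hmask_flip : (flipMask i ω).2.2 i = !ω.2.2 i := by simp [flipMask]
    simp only [h, hmask_flip, hf_flip, hg_flip]
    cases ω.2.2 i <;> simp [add_comm]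
  have hsum :=
    integral_add hh ((measurePreserving_flipMask μ ρ i).integrable_comp_of_integrable hh)
  simp only [Function.comp_def, h_add, h_flip] at hsum
  rw [integral_add hf hg] at hsum
  linarith

theorem integral_sgn_mul_loss_Zhat {A : (Fin n → Z) → R → W} {ℓ : W → Z → ℝ} (i : Fin n)
    (hI : Integrable (fun ω => ℓ (Wtm A i ω) (Ztp n i ω) - ℓ (Wtp A ω) (Ztp n i ω))
      (ssP μ ρ n)) :
    ∫ ω, sgn n i ω * (ℓ (Wtm A i ω) (Zhat n i ω) - ℓ (Wtp A ω) (Zhat n i ω)) ∂(ssP μ ρ n)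
      = ∫ ω, (ℓ (Wtm A i ω) (Ztp n i ω) - ℓ (Wtp A ω) (Ztp n i ω)) ∂(ssP μ ρ n) := by
  set g : SSOmega Z R n → ℝ := fun ω => ℓ (Wtm A i ω) (Ztp n i ω) - ℓ (Wtp A ω) (Ztp n i ω)
  have h_ite : ∀ ω, sgn n i ω * (ℓ (Wtm A i ω) (Zhat n i ω) - ℓ (Wtp A ω) (Zhat n i ω))
      = if ω.2.2 i then g (swapRow i ω) else g ω := by
    intro ω
    cases hω : ω.2.2 i
    · simp [g, sgn, Zhat, Ztp, hω]
    · simp [g, sgn, Zhat, Ztm, hω]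
  have h_swap : ∫ ω, g (swapRow i ω) ∂(ssP μ ρ n) = ∫ ω, g ω ∂(ssP μ ρ n) :=
    (measurePreserving_swapRow μ ρ i).integral_comp_of_aestronglyMeasurable hI.1
  rw [integral_congr_ae (ae_of_all _ h_ite),
    integral_ite_mask_eq_average μ ρ i (f := fun ω => g (swapRow i ω))
      ((measurePreserving_swapRow μ ρ i).integrable_comp_of_integrable hI) hI
      (fun _ => rfl) (fun _ => rfl), h_swap]
  ring

section Losses

variable [MeasurableSpace W] {μ ρ} {A : (Fin n → Z) → R → W} {ℓ : W → Z → ℝ}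

theorem integrable_loss_trainingPair (hA : Measurable (Function.uncurry A))
    (hℓ : Measurable (Function.uncurry ℓ))
    (hI : Integrable (fun p : SSOmega Z R n × Z => ℓ (Wtp A p.1) p.2) ((ssP μ ρ n).prod μ)) :
    Integrable (fun q : ((Fin n → Z) × R) × Z => ℓ (Function.uncurry A q.1) q.2)
      (((Measure.pi fun _ : Fin n => μ).prod ρ).prod μ) :=
  ((measurePreserving_trainingPair μ ρ).prod (MeasurePreserving.id μ)).integrable_comp
    (hℓ.comp ((hA.comp measurable_fst).prodMk measurable_snd)).aestronglyMeasurable |>.mp hI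

theorem integrable_loss_Wtm_Ztp (hA : Measurable (Function.uncurry A))
    (hℓ : Measurable (Function.uncurry ℓ))
    (hI : Integrable (fun p : SSOmega Z R n × Z => ℓ (Wtp A p.1) p.2) ((ssP μ ρ n).prod μ))
    (i : Fin n) :
    Integrable (fun ω => ℓ (Wtm A i ω) (Ztp n i ω)) (ssP μ ρ n) := by
  have h_ghost : Integrable (fun ω => ℓ (Wtp A ω) (Ztm n i ω)) (ssP μ ρ n) :=
    (measurePreserving_trainingPair_Ztm μ ρ i).integrable_comp_of_integrable
      (integrable_loss_trainingPair hA hℓ hI)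
  simpa [Function.comp_def] using
    (measurePreserving_swapRow μ ρ i).integrable_comp_of_integrable h_ghost

theorem integral_loss_Wtm_Ztp (hA : Measurable (Function.uncurry A))
    (hℓ : Measurable (Function.uncurry ℓ))
    (hI : Integrable (fun p : SSOmega Z R n × Z => ℓ (Wtp A p.1) p.2) ((ssP μ ρ n).prod μ))
    (i : Fin n) :
    ∫ ω, ℓ (Wtm A i ω) (Ztp n i ω) ∂(ssP μ ρ n) = ∫ ω, popRisk μ ℓ (Wtp A ω) ∂(ssP μ ρ n) := by
  have hF := integrable_loss_trainingPair hA hℓ hI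
  calc ∫ ω, ℓ (Wtm A i ω) (Ztp n i ω) ∂(ssP μ ρ n)
      = ∫ ω, ℓ (Wtp A (swapRow i ω)) (Ztm n i (swapRow i ω)) ∂(ssP μ ρ n) := by simp
    _ = ∫ ω, ℓ (Wtp A ω) (Ztm n i ω) ∂(ssP μ ρ n) :=
      (measurePreserving_swapRow μ ρ i).integral_comp_of_aestronglyMeasurable
        ((measurePreserving_trainingPair_Ztm μ ρ i).integrable_comp_of_integrable hF).1
    _ = ∫ q, ℓ (Function.uncurry A q.1) q.2
          ∂(((Measure.pi fun _ : Fin n => μ).prod ρ).prod μ) :=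
      (measurePreserving_trainingPair_Ztm μ ρ i).integral_comp_of_aestronglyMeasurable hF.1
    _ = ∫ p, ℓ (Wtp A p.1) p.2 ∂((ssP μ ρ n).prod μ) :=
      (((measurePreserving_trainingPair μ ρ).prod
        (MeasurePreserving.id μ)).integral_comp_of_aestronglyMeasurable hF.1).symm
    _ = ∫ ω, popRisk μ ℓ (Wtp A ω) ∂(ssP μ ρ n) :=
      (integral_integral (f := fun ω z => ℓ (Wtp A ω) z) hI).symm

theorem genErr_eq_sum_integral_loss_Wtm_sub_Wtp (hn : n ≠ 0)
    (hA : Measurable (Function.uncurry A)) (hℓ : Measurable (Function.uncurry ℓ))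
    (hI1 : Integrable (fun p : SSOmega Z R n × Z => ℓ (Wtp A p.1) p.2) ((ssP μ ρ n).prod μ))
    (hI2 : ∀ i, Integrable (fun ω : SSOmega Z R n => ℓ (Wtp A ω) (Ztp n i ω)) (ssP μ ρ n)) :
    genErr μ ρ n A ℓ = (n : ℝ)⁻¹ * ∑ i, ∫ ω,
      (ℓ (Wtm A i ω) (Ztp n i ω) - ℓ (Wtp A ω) (Ztp n i ω)) ∂(ssP μ ρ n) := by
  have h_term : ∀ i, ∫ ω, (ℓ (Wtm A i ω) (Ztp n i ω) - ℓ (Wtp A ω) (Ztp n i ω)) ∂(ssP μ ρ n)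
      = (∫ ω, popRisk μ ℓ (Wtp A ω) ∂(ssP μ ρ n)) - ∫ ω, ℓ (Wtp A ω) (Ztp n i ω) ∂(ssP μ ρ n) :=
    fun i => by
      rw [integral_sub (integrable_loss_Wtm_Ztp hA hℓ hI1 i) (hI2 i),
        integral_loss_Wtm_Ztp hA hℓ hI1 i]
  rw [genErr, integral_const_mul, integral_finsetSum _ fun i _ => hI2 i]
  simp only [h_term, Finset.sum_sub_distrib, Finset.sum_const, Finset.card_univ,
    Fintype.card_fin, nsmul_eq_mul]
  field_simp

end Losses

end Supersample

section Statement1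

variable {Z R W : Type*} [MeasurableSpace Z] [MeasurableSpace W] [MeasurableSpace R]

theorem genErr_three_representations_general
    (μ : Measure Z) [IsProbabilityMeasure μ] (ρ : Measure R) [IsProbabilityMeasure ρ]
    (n : ℕ) (hn : 0 < n)
    (A : (Fin n → Z) → R → W) (hA : Measurable (Function.uncurry A))
    (ℓ : W → Z → ℝ) (hℓ : Measurable (Function.uncurry ℓ))
    -- all the expectations appearing below are finite:
    (hI1 : Integrable (fun p : SSOmega Z R n × Z => ℓ (Wtp A p.1) p.2) ((ssP μ ρ n).prod μ))
    (hI2 : ∀ i, Integrable (fun ω : SSOmega Z R n => ℓ (Wtp A ω) (Ztp n i ω)) (ssP μ ρ n)) :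
    genErr μ ρ n A ℓ =
      (n : ℝ)⁻¹ * ∑ i, ∫ ω,
        (ℓ (Wtm A i ω) (Ztp n i ω) - ℓ (Wtp A ω) (Ztp n i ω)) ∂(ssP μ ρ n) ∧
    genErr μ ρ n A ℓ =
      (n : ℝ)⁻¹ * ∑ i, ∫ ω,
        sgn n i ω * (ℓ (Wtm A i ω) (Zhat n i ω) - ℓ (Wtp A ω) (Zhat n i ω)) ∂(ssP μ ρ n) ∧
    genErr μ ρ n A ℓ =
      (n : ℝ)⁻¹ * ∑ i, ∫ ω,
        sgn n i ω * (ℓ (Wbar A i ω) (Ztp n i ω) - ℓ (Wsel A i ω) (Ztp n i ω)) ∂(ssP μ ρ n) := by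
  have h_standard := genErr_eq_sum_integral_loss_Wtm_sub_Wtp hn.ne' hA hℓ hI1 hI2
  refine ⟨h_standard, ?_, ?_⟩ <;> rw [h_standard] <;> congr 1 <;>
    refine Finset.sum_congr rfl fun i _ => ?_
  · exact (integral_sgn_mul_loss_Zhat μ ρ i
      ((integrable_loss_Wtm_Ztp hA hℓ hI1 i).sub (hI2 i))).symm
  · simp only [sgn_mul_loss_Wbar_sub_Wsel]

/-- Lemma `key` of the paper: the expected generalization error admits the
three supersample representations of Eq. (standard), Eq. (mask-for-data) and
Eq. (mask-for-weight). -/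
theorem genErr_three_representations
    (μ : Measure Z) [IsProbabilityMeasure μ] (ρ : Measure R) [IsProbabilityMeasure ρ]
    (n : ℕ) (hn : 0 < n)
    (A : (Fin n → Z) → R → W) (hA : Measurable (Function.uncurry A))
    (ℓ : W → Z → ℝ) (hℓ : Measurable (Function.uncurry ℓ)) (hℓ0 : ∀ w z, 0 ≤ ℓ w z)
    -- all the expectations appearing below are finite:
    (hI1 : Integrable (fun p : SSOmega Z R n × Z => ℓ (Wtp A p.1) p.2) ((ssP μ ρ n).prod μ))
    (hI2 : ∀ i, Integrable (fun ω : SSOmega Z R n => ℓ (Wtp A ω) (Ztp n i ω)) (ssP μ ρ n))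
    (hI3 : ∀ i, Integrable (fun ω : SSOmega Z R n => ℓ (Wtm A i ω) (Ztp n i ω)) (ssP μ ρ n))
    (hI4 : ∀ i, Integrable (fun ω : SSOmega Z R n => ℓ (Wtp A ω) (Ztm n i ω)) (ssP μ ρ n))
    (hI5 : ∀ i, Integrable (fun ω : SSOmega Z R n => ℓ (Wtm A i ω) (Ztm n i ω)) (ssP μ ρ n)) :
    genErr μ ρ n A ℓ =
      (n : ℝ)⁻¹ * ∑ i, ∫ ω,
        (ℓ (Wtm A i ω) (Ztp n i ω) - ℓ (Wtp A ω) (Ztp n i ω)) ∂(ssP μ ρ n) ∧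
    genErr μ ρ n A ℓ =
      (n : ℝ)⁻¹ * ∑ i, ∫ ω,
        sgn n i ω * (ℓ (Wtm A i ω) (Zhat n i ω) - ℓ (Wtp A ω) (Zhat n i ω)) ∂(ssP μ ρ n) ∧
    genErr μ ρ n A ℓ =
      (n : ℝ)⁻¹ * ∑ i, ∫ ω,
        sgn n i ω * (ℓ (Wbar A i ω) (Ztp n i ω) - ℓ (Wsel A i ω) (Ztp n i ω)) ∂(ssP μ ρ n) :=
  genErr_three_representations_general μ ρ n hn A hA ℓ hℓ hI1 hI2

end Statement1
end SCHPaper
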